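/- For any integers N ≥ k ≥ 1, Z_k(N) ≤ 2k · (log N + 5)^{k−1} / N. -/

import Mathlib

open Finset

/-- `ζ(s) = ∑_{j=1}^∞ j^{−s}` as a real number (for a natural exponent `s`). -/
noncomputable def zetaR (s : ℕ) : ℝ := ∑' j : ℕ, (1 : ℝ) / ((j : ℝ) + 1) ^ s

lemma zetaR_nonneg (s : ℕ) : 0 ≤ zetaR s :=
  tsum_nonneg fun j => by positivity

lemma partial_bound (n : ℕ) :
    ∑ j ∈ range n, (1:ℝ) / ((j:ℝ)+2)^2 ≤ 1 - 1/((n:ℝ)+1) := by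
  induction n with
  | zero => norm_num
  | succ n ih =>
    rw [Finset.sum_range_succ]
    have h1 : (0:ℝ) < (n:ℝ)+1 := by positivity
    have h2 : (0:ℝ) < (n:ℝ)+2 := by positivity
    have key : (1:ℝ)/((n:ℝ)+2)^2 ≤ 1/((n:ℝ)+1) - 1/((n:ℝ)+2) := by
      rw [div_sub_div _ _ (ne_of_gt h1) (ne_of_gt h2), div_le_div_iff₀ (by positivity) (by positivity)]
      nlinarith [sq_nonneg ((n:ℝ)+1)]
    have e : ((n:ℕ)+1:ℝ)+1 = (n:ℝ)+2 := by push_cast; ring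
    push_cast
    rw [show (n:ℝ)+1+1 = (n:ℝ)+2 by ring]
    linarith

lemma summable_sq : Summable (fun j : ℕ => (1:ℝ) / ((j:ℝ)+1)^2) := by
  apply summable_of_sum_range_le (c := 2) (fun n => by positivity)
  intro n
  match n with
  | 0 => norm_num
  | (m+1) =>
    rw [Finset.sum_range_succ']
    have : ∑ i ∈ range m, (1:ℝ)/((↑(i+1):ℝ)+1)^2 ≤ 1 - 1/((m:ℝ)+1) := by
      have := partial_bound m
      refine le_trans (le_of_eq ?_) this
      apply Finset.sum_congr rfl; intro j _; push_cast; ring_nf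
    have h1 : (0:ℝ) < (m:ℝ)+1 := by positivity
    have h2 : (0:ℝ) ≤ ((m:ℝ)+1)⁻¹ := by positivity
    norm_num at this ⊢
    linarith

lemma term_le (s : ℕ) (hs : 2 ≤ s) (j : ℕ) :
    (1:ℝ) / ((j:ℝ)+1)^s ≤ (1:ℝ) / ((j:ℝ)+1)^2 := by
  apply one_div_le_one_div_of_le (by positivity)
  exact pow_le_pow_right₀ (by push_cast; linarith [Nat.cast_nonneg (α := ℝ) j]) hs

lemma summable_term (s : ℕ) (hs : 2 ≤ s) : Summable (fun j : ℕ => (1:ℝ) / ((j:ℝ)+1)^s) :=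
  Summable.of_nonneg_of_le (fun j => by positivity) (term_le s hs) summable_sq

lemma summable_tail (s : ℕ) (hs : 2 ≤ s) : Summable (fun j : ℕ => (1:ℝ) / ((j:ℝ)+2)^s) := by
  have := (summable_nat_add_iff (f := fun j : ℕ => (1:ℝ) / ((j:ℝ)+1)^s) 1).2 (summable_term s hs)
  refine this.congr fun j => ?_
  push_cast; ring_nf

lemma tail_sq_le_one : ∑' j : ℕ, (1:ℝ) / ((j:ℝ)+2)^2 ≤ 1 := by
  refine Summable.tsum_le_of_sum_range_le (summable_tail 2 le_rfl) fun n => ?_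
  have := partial_bound n
  have h2 : (0:ℝ) ≤ ((n:ℝ)+1)⁻¹ := by positivity
  rw [one_div] at this
  linarith

lemma zetaR_tail (s : ℕ) (hs : 2 ≤ s) : zetaR s ≤ 1 + 4 / 2^s := by
  have hsum := summable_term s hs
  rw [zetaR, Summable.tsum_eq_zero_add hsum]
  have h0 : (1:ℝ) / (((0:ℕ):ℝ) + 1)^s = 1 := by norm_num
  rw [h0]
  have key : ∑' j : ℕ, (1:ℝ) / ((↑(j+1):ℝ)+1)^s ≤ 4 / 2^s := by
    have hcong : ∀ j : ℕ, (1:ℝ) / ((↑(j+1):ℝ)+1)^s = 1 / ((j:ℝ)+2)^s := by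
      intro j; push_cast; ring_nf
    calc ∑' j : ℕ, (1:ℝ) / ((↑(j+1):ℝ)+1)^s
        = ∑' j : ℕ, (1:ℝ) / ((j:ℝ)+2)^s := tsum_congr hcong
      _ ≤ ∑' j : ℕ, (4:ℝ)/2^s * (1 / ((j:ℝ)+2)^2) := by
          apply Summable.tsum_le_tsum _ (summable_tail s hs) ((summable_tail 2 le_rfl).mul_left _)
          intro j
          have h2 : (0:ℝ) < (j:ℝ)+2 := by positivity
          rw [div_mul_div_comm, mul_one, div_le_div_iff₀ (by positivity) (by positivity)]
          have hpow : (2:ℝ)^s * ((j:ℝ)+2)^2 ≤ 4 * ((j:ℝ)+2)^s := by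
            have e2 : (2:ℝ)^s = 4 * 2^(s-2) := by
              rw [show (4:ℝ) = 2^2 by norm_num, ← pow_add]
              congr 1; omega
            have es : ((j:ℝ)+2)^s = ((j:ℝ)+2)^2 * ((j:ℝ)+2)^(s-2) := by
              rw [← pow_add]; congr 1; omega
            rw [e2, es]
            have : (2:ℝ)^(s-2) ≤ ((j:ℝ)+2)^(s-2) := by
              apply pow_le_pow_left₀ (by norm_num) (by linarith [Nat.cast_nonneg (α := ℝ) j])
            nlinarith [pow_nonneg (le_of_lt h2) 2, pow_pos (show (0:ℝ)<2 by norm_num) (s-2)]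
          linarith
      _ = (4:ℝ)/2^s * ∑' j : ℕ, (1 / ((j:ℝ)+2)^2) := tsum_mul_left
      _ ≤ 4/2^s * 1 := by
          apply mul_le_mul_of_nonneg_left tail_sq_le_one (by positivity)
      _ = 4/2^s := by ring
  linarith

lemma zetaR_two_mul_le (a : ℕ) (ha : 1 ≤ a) : zetaR (2*a) ≤ 1 + 4/4^a := by
  have := zetaR_tail (2*a) (by omega)
  have e : (2:ℝ)^(2*a) = 4^a := by
    rw [pow_mul]; norm_num
  rw [e] at this; exact this

lemma zetaR_le_two (a : ℕ) (ha : 1 ≤ a) : zetaR (2*a) ≤ 2 := by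
  have h := zetaR_two_mul_le a ha
  have : (4:ℝ)/4^a ≤ 1 := by
    rw [div_le_one (by positivity)]
    calc (4:ℝ) = 4^1 := by norm_num
    _ ≤ 4^a := pow_le_pow_right₀ (by norm_num) ha
  linarith

noncomputable def fA (a : ℕ) : ℝ := zetaR (2*a) / a

lemma fA_nonneg (a : ℕ) : 0 ≤ fA a :=
  div_nonneg (zetaR_nonneg _) (Nat.cast_nonneg a)

lemma harmonic_le (N : ℕ) (h : 1 ≤ N) :
    ∑ a ∈ Icc 1 N, (1:ℝ)/(a:ℝ) ≤ Real.log N + 1 := by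
  induction N with
  | zero => omega
  | succ n ih =>
    rcases Nat.eq_or_lt_of_le h with h1 | h1
    · simp [← h1]
    · have hn : 1 ≤ n := by omega
      have hc : (0:ℝ) < (n:ℝ) := by exact_mod_cast hn
      rw [Finset.sum_Icc_succ_top (by omega)]
      have hlog : (1:ℝ)/((n:ℝ)+1) ≤ Real.log ((n:ℝ)+1) - Real.log n := by
        have hx : (0:ℝ) < (n:ℝ)/((n:ℝ)+1) := by positivity
        have := Real.log_le_sub_one_of_pos hx
        rw [Real.log_div (ne_of_gt hc) (by positivity)] at this
        have e : (n:ℝ)/((n:ℝ)+1) - 1 = -(1/((n:ℝ)+1)) := by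
          field_simp
          ring
        rw [e] at this; linarith
      have := ih hn
      push_cast
      linarith

lemma geomS_le (N : ℕ) : ∑ a ∈ Icc 1 N, (4:ℝ)/4^a ≤ 4/3 := by
  have key : ∀ n : ℕ, ∑ a ∈ Icc 1 n, ((1:ℝ)/4)^a ≤ 1/3 - (1/3) * (1/4)^n := by
    intro n
    induction n with
    | zero => norm_num
    | succ m ih =>
      rw [Finset.sum_Icc_succ_top (by omega)]
      have h4 : (0:ℝ) < (1/4:ℝ)^m := by positivity
      have e : ((1:ℝ)/4)^(m+1) = (1/4)^m * (1/4) := by rw [pow_succ]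
      rw [e]; linarith
  have := key N
  have h4 : (0:ℝ) ≤ (1/4:ℝ)^N := by positivity
  have e : ∑ a ∈ Icc 1 N, (4:ℝ)/4^a = 4 * ∑ a ∈ Icc 1 N, ((1:ℝ)/4)^a := by
    rw [Finset.mul_sum]; apply Finset.sum_congr rfl
    intro a _; rw [div_pow, one_pow]; ring
  rw [e]; linarith

lemma S_le (N : ℕ) (h : 1 ≤ N) :
    ∑ a ∈ Icc 1 N, fA a ≤ Real.log N + 5 := by
  have step : ∀ a ∈ Icc 1 N, fA a ≤ 1/(a:ℝ) + 4/4^a := by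
    intro a ha
    rw [Finset.mem_Icc] at ha
    have ha1 : (1:ℝ) ≤ (a:ℝ) := by exact_mod_cast ha.1
    have hz := zetaR_two_mul_le a ha.1
    have h4 : (0:ℝ) < 4/4^a := by positivity
    calc fA a = zetaR (2*a) / a := rfl
      _ ≤ (1 + 4/4^a) / a := by
          apply div_le_div_of_nonneg_right hz (by linarith) |>.trans_eq rfl
      _ = 1/(a:ℝ) + (4/4^a)/a := by ring
      _ ≤ 1/(a:ℝ) + 4/4^a := by
          have : (4/4^a : ℝ)/a ≤ 4/4^a := by
            rw [div_le_iff₀ (by linarith)]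
            nlinarith
          linarith
  calc ∑ a ∈ Icc 1 N, fA a ≤ ∑ a ∈ Icc 1 N, ((1:ℝ)/(a:ℝ) + 4/4^a) :=
        Finset.sum_le_sum step
    _ = (∑ a ∈ Icc 1 N, (1:ℝ)/(a:ℝ)) + ∑ a ∈ Icc 1 N, (4:ℝ)/4^a :=
        Finset.sum_add_distrib
    _ ≤ (Real.log N + 1) + 4/3 := add_le_add (harmonic_le N h) (geomS_le N)
    _ ≤ Real.log N + 5 := by linarith

def uFn {k : ℕ} (i : Fin k) (a : Fin k → ℕ) : Fin k → ℕ := Function.update a i 0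

noncomputable def gFn {k : ℕ} (i : Fin k) (j : Fin k) (x : ℕ) : ℝ :=
  if j = i then 1 else fA x

def tFn (N : ℕ) {k : ℕ} (i : Fin k) (j : Fin k) : Finset ℕ :=
  if j = i then ({0} : Finset ℕ) else Icc 1 N

lemma uFn_ne {k : ℕ} {i j : Fin k} (h : j ≠ i) (a : Fin k → ℕ) : uFn i a j = a j :=
  Function.update_of_ne h 0 a

lemma uFn_eq {k : ℕ} (i : Fin k) (a : Fin k → ℕ) : uFn i a i = 0 :=
  Function.update_self i 0 a

lemma gFn_nonneg {k : ℕ} (i j : Fin k) (x : ℕ) : 0 ≤ gFn i j x := by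
  rw [gFn]; split
  · norm_num
  · exact fA_nonneg _


/-- `Z_k(m) = ∑ ∏_{i=1}^k ζ(2 a_i)/a_i`, summed over all compositions
`(a_1, …, a_k)` of `m` into `k` positive parts; in particular `Z_k(m) = 0` for `m < k`. -/
noncomputable def Zk (k m : ℕ) : ℝ :=
  ∑ a ∈ Finset.Nat.antidiagonalTuple k m,
    if ∀ i, 1 ≤ a i then ∏ i, zetaR (2 * a i) / (a i : ℝ) else 0
lemma sum_le_sum_inj {α β : Type*} {s : Finset α} {t : Finset β}
    {f : α → ℝ} {g : β → ℝ} (u : α → β)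
    (hinj : ∀ x ∈ s, ∀ y ∈ s, u x = u y → x = y)
    (hmaps : ∀ x ∈ s, u x ∈ t) (hfg : ∀ x ∈ s, f x = g (u x))
    (hg : ∀ b ∈ t, 0 ≤ g b) :
    ∑ a ∈ s, f a ≤ ∑ b ∈ t, g b := by
  classical
  calc ∑ a ∈ s, f a = ∑ a ∈ s, g (u a) := Finset.sum_congr rfl hfg
    _ = ∑ b ∈ s.image u, g b := (Finset.sum_image hinj).symm
    _ ≤ ∑ b ∈ t, g b := by
        apply Finset.sum_le_sum_of_subset_of_nonneg
        · intro b hb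
          obtain ⟨a, ha, rfl⟩ := Finset.mem_image.1 hb
          exact hmaps a ha
        · intro b hb _
          exact hg b hb

lemma step2 (N k : ℕ) (i : Fin k) :
    ∑ a ∈ Finset.Nat.antidiagonalTuple k N,
      (if ∀ j, 1 ≤ a j then ∏ j ∈ univ.erase i, fA (a j) else 0)
    ≤ (∑ b ∈ Icc 1 N, fA b) ^ (k - 1) := by
  classical
  rw [← Finset.sum_filter]
  have hmem : ∀ a ∈ (Finset.Nat.antidiagonalTuple k N).filter (fun a => ∀ j, 1 ≤ a j),
      (∑ j, a j = N) ∧ (∀ j, 1 ≤ a j) := by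
    intro a ha
    rw [Finset.mem_filter, Finset.Nat.mem_antidiagonalTuple] at ha
    exact ha
  set T := (Finset.Nat.antidiagonalTuple k N).filter (fun a => ∀ j, 1 ≤ a j) with hT
  have hinj : ∀ x ∈ T, ∀ y ∈ T, uFn i x = uFn i y → x = y := by
    intro x hx y hy hxy
    funext j
    by_cases hj : j = i
    · subst hj
      have hx' := (hmem x hx).1
      have hy' := (hmem y hy).1
      have hsub : ∑ l ∈ univ.erase j, x l = ∑ l ∈ univ.erase j, y l := by
        apply Finset.sum_congr rfl
        intro l hl
        have hne : l ≠ j := (Finset.mem_erase.1 hl).1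
        have := congrFun hxy l
        rwa [uFn_ne hne, uFn_ne hne] at this
      have ex : x j + ∑ l ∈ univ.erase j, x l = N := by
        rw [Finset.add_sum_erase univ x (mem_univ j)]; exact hx'
      have ey : y j + ∑ l ∈ univ.erase j, y l = N := by
        rw [Finset.add_sum_erase univ y (mem_univ j)]; exact hy'
      omega
    · have := congrFun hxy j
      rwa [uFn_ne hj, uFn_ne hj] at this
  have hterm : ∀ a ∈ T, ∏ j ∈ univ.erase i, fA (a j) = ∏ j, gFn i j (uFn i a j) := by
    intro a _
    rw [← Finset.mul_prod_erase univ (fun j => gFn i j (uFn i a j)) (mem_univ i)]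
    have h1 : gFn i i (uFn i a i) = 1 := by rw [gFn, if_pos rfl]
    rw [h1, one_mul]
    apply Finset.prod_congr rfl
    intro j hj
    have hne : j ≠ i := (Finset.mem_erase.1 hj).1
    rw [gFn, if_neg hne, uFn_ne hne]
  have hmaps : ∀ a ∈ T, uFn i a ∈ Fintype.piFinset (tFn N i) := by
    intro a ha
    rw [Fintype.mem_piFinset]
    intro j
    by_cases hj : j = i
    · subst hj; rw [uFn_eq, tFn, if_pos rfl]; exact Finset.mem_singleton_self 0
    · rw [tFn, if_neg hj, uFn_ne hj, Finset.mem_Icc]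
      refine ⟨(hmem a ha).2 j, ?_⟩
      calc a j ≤ ∑ l, a l := Finset.single_le_sum (fun l _ => Nat.zero_le _) (mem_univ j)
        _ = N := (hmem a ha).1
  have hg : ∀ b ∈ Fintype.piFinset (tFn N i), 0 ≤ ∏ j, gFn i j (b j) := by
    intro b _
    exact Finset.prod_nonneg fun j _ => gFn_nonneg i j (b j)
  have main := sum_le_sum_inj (s := T) (t := Fintype.piFinset (tFn N i))
    (g := fun b => ∏ j, gFn i j (b j)) (uFn i) hinj hmaps hterm hg
  refine main.trans (le_of_eq ?_)
  calc ∑ b ∈ Fintype.piFinset (tFn N i), ∏ j, gFn i j (b j)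
      = ∏ j, ∑ x ∈ tFn N i j, gFn i j x := (Finset.prod_univ_sum (tFn N i) (gFn i)).symm
    _ = ∏ j, (if j = i then (1:ℝ) else ∑ b ∈ Icc 1 N, fA b) := by
        apply Finset.prod_congr rfl
        intro j _
        by_cases hj : j = i
        · rw [tFn, if_pos hj, if_pos hj, Finset.sum_singleton, gFn, if_pos hj]
        · rw [tFn, if_neg hj, if_neg hj]
          apply Finset.sum_congr rfl
          intro x _
          rw [gFn, if_neg hj]
    _ = (∑ b ∈ Icc 1 N, fA b) ^ (k - 1) := by
        rw [← Finset.mul_prod_erase univ _ (mem_univ i), if_pos rfl, one_mul]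
        rw [Finset.prod_congr rfl (fun j hj => if_neg (Finset.mem_erase.1 hj).1),
          Finset.prod_const, Finset.card_erase_of_mem (mem_univ i), Finset.card_univ,
          Fintype.card_fin]

lemma pointwise (N k : ℕ) (a : Fin k → ℕ)
    (ha : a ∈ Finset.Nat.antidiagonalTuple k N) :
    (N:ℝ) * (if ∀ j, 1 ≤ a j then ∏ j, zetaR (2 * a j) / (a j : ℝ) else 0)
    ≤ ∑ i : Fin k, 2 * (if ∀ j, 1 ≤ a j then ∏ j ∈ univ.erase i, fA (a j) else 0) := by
  by_cases hp : ∀ j, 1 ≤ a j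
  · simp only [if_pos hp]
    have hsum : ∑ j, a j = N := Finset.Nat.mem_antidiagonalTuple.1 ha
    have hNr : (N:ℝ) = ∑ j, (a j : ℝ) := by
      rw [← hsum]; push_cast; rfl
    have hprodeq : ∏ j, zetaR (2 * a j) / (a j : ℝ) = ∏ j, fA (a j) := rfl
    rw [hprodeq, hNr, Finset.sum_mul]
    apply Finset.sum_le_sum
    intro i _
    rw [← Finset.mul_prod_erase univ (fun j => fA (a j)) (mem_univ i)]
    have hai : (a i : ℝ) ≠ 0 := by
      have := hp i; positivity
    have hz : (a i : ℝ) * fA (a i) = zetaR (2 * a i) := by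
      rw [fA, mul_div_cancel₀ _ hai]
    have hpn : (0:ℝ) ≤ ∏ j ∈ univ.erase i, fA (a j) :=
      Finset.prod_nonneg fun j _ => fA_nonneg _
    calc (a i : ℝ) * (fA (a i) * ∏ j ∈ univ.erase i, fA (a j))
        = zetaR (2 * a i) * ∏ j ∈ univ.erase i, fA (a j) := by rw [← mul_assoc, hz]
      _ ≤ 2 * ∏ j ∈ univ.erase i, fA (a j) :=
          mul_le_mul_of_nonneg_right (zetaR_le_two (a i) (hp i)) hpn
  · simp [hp]

/-- For integers `N ≥ k ≥ 1`, `Z_k(N) ≤ 2k (log N + 5)^{k−1} / N`. -/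
theorem stmt11 (N k : ℕ) (hk : 1 ≤ k) (hN : k ≤ N) :
    Zk k N ≤ 2 * (k : ℝ) * (Real.log N + 5) ^ (k - 1) / (N : ℝ) := by
  have hN1 : 1 ≤ N := hk.trans hN
  have hNpos : (0:ℝ) < N := by exact_mod_cast hN1
  have hS0 : (0:ℝ) ≤ ∑ b ∈ Icc 1 N, fA b := Finset.sum_nonneg fun b _ => fA_nonneg b
  have hS : ∑ b ∈ Icc 1 N, fA b ≤ Real.log N + 5 := S_le N hN1
  have key : (N:ℝ) * Zk k N ≤ 2 * (k:ℝ) * (∑ b ∈ Icc 1 N, fA b) ^ (k - 1) := by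
    rw [Zk, Finset.mul_sum]
    calc ∑ a ∈ Finset.Nat.antidiagonalTuple k N,
          (N:ℝ) * (if ∀ j, 1 ≤ a j then ∏ j, zetaR (2 * a j) / (a j : ℝ) else 0)
        ≤ ∑ a ∈ Finset.Nat.antidiagonalTuple k N, ∑ i : Fin k,
            2 * (if ∀ j, 1 ≤ a j then ∏ j ∈ univ.erase i, fA (a j) else 0) :=
          Finset.sum_le_sum fun a ha => pointwise N k a ha
      _ = ∑ i : Fin k, ∑ a ∈ Finset.Nat.antidiagonalTuple k N,
            2 * (if ∀ j, 1 ≤ a j then ∏ j ∈ univ.erase i, fA (a j) else 0) :=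
          Finset.sum_comm
      _ ≤ ∑ i : Fin k, 2 * (∑ b ∈ Icc 1 N, fA b) ^ (k - 1) := by
          apply Finset.sum_le_sum
          intro i _
          rw [← Finset.mul_sum]
          exact mul_le_mul_of_nonneg_left (step2 N k i) (by norm_num)
      _ = 2 * (k:ℝ) * (∑ b ∈ Icc 1 N, fA b) ^ (k - 1) := by
          rw [Finset.sum_const, Finset.card_univ, Fintype.card_fin, nsmul_eq_mul]
          ring
  rw [le_div_iff₀ hNpos]
  have hpow : (∑ b ∈ Icc 1 N, fA b) ^ (k - 1) ≤ (Real.log N + 5) ^ (k - 1) :=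
    pow_le_pow_left₀ hS0 hS _
  calc Zk k N * (N:ℝ) = (N:ℝ) * Zk k N := mul_comm _ _
    _ ≤ 2 * (k:ℝ) * (∑ b ∈ Icc 1 N, fA b) ^ (k - 1) := key
    _ ≤ 2 * (k:ℝ) * (Real.log N + 5) ^ (k - 1) := by
        apply mul_le_mul_of_nonneg_left hpow
        positivity
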